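/- Under the hypotheses of the symmetric fixpoint lemma—f, g monotone with g_u q-stable for all u, F(x) = f(x, g_x^(q)(⊥)) p-stable, f_v(x) := f(x,v) p-stable for all v, and G(y) := g(f_y^(p)(⊥), y) q-stable—the function h = (f,g) : L₁×L₂ → L₁×L₂ is (pq + max(p,q))-stable. -/

import Mathlib

/-!
Write `h = (f, g)` and `F x = f (x, g_x^[q] ⊥)`. The point `z* = (F^[p] ⊥, g_{F^[p] ⊥}^[q] ⊥)`
is a fixed point of `h` lying below every pre-fixed point of `h`. Each iterate of `F` costs at
most `q + 1` iterations of `h`, so `z*.1 ≤ (h^[(q+1)p] ⊥).1`. The hypotheses on `f_v` and `G` are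
the same hypotheses for the swapped system `(g ∘ swap, f ∘ swap)`, whose iterates are the swapped
iterates of `h`; this gives a fixed point `(x', y')` of `h` with `z* ≤ (x', y')` and
`y' ≤ (h^[(p+1)q] ⊥).2`. Since `pq + max p q` dominates both `(q+1)p` and `(p+1)q`, the iterate
`h^[pq + max p q] ⊥` is squeezed to `z*`.
-/

open Function

def IsStable {α : Type*} [Bot α] (φ : α → α) (p : ℕ) : Prop :=
  φ^[p + 1] ⊥ = φ^[p] ⊥

theorem IsStable.isFixedPt {α : Type*} [Bot α] {φ : α → α} {p : ℕ} (h : IsStable φ p) :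
    IsFixedPt φ (φ^[p] ⊥) :=
  (iterate_succ_apply' φ p ⊥).symm.trans h

def approxFix {α β : Type*} [Bot β] (g : α × β → β) (q : ℕ) (x : α) : β :=
  (fun y => g (x, y))^[q] ⊥

/-- The map `F` of the symmetric fixpoint lemma. -/
def approxSubst {α β : Type*} [Bot β] (f : α × β → α) (g : α × β → β) (q : ℕ) (x : α) : α :=
  f (x, approxFix g q x)

def approxFixedPt {α β : Type*} [Bot α] [Bot β] (f : α × β → α) (g : α × β → β) (p q : ℕ) :
    α × β :=
  ((approxSubst f g q)^[p] ⊥, approxFix g q ((approxSubst f g q)^[p] ⊥))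

section Kleene

variable {α : Type*} [Preorder α] [OrderBot α] {φ : α → α}

theorem Monotone.iterate_bot_le_of_map_le (hφ : Monotone φ) {c : α} (hc : φ c ≤ c) (n : ℕ) :
    φ^[n] ⊥ ≤ c :=
  (hφ.iterate n bot_le).trans (hφ.antitone_iterate_of_map_le hc n.zero_le)

theorem Monotone.monotone_iterate_bot (hφ : Monotone φ) : Monotone fun n => φ^[n] (⊥ : α) :=
  hφ.monotone_iterate_of_le_map bot_le

end Kleene

theorem Monotone.isStable_of_isFixedPt_le_iterate {α : Type*} [PartialOrder α] [OrderBot α]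
    {φ : α → α} (hφ : Monotone φ) {c : α} (hc : IsFixedPt φ c) {n : ℕ} (hcn : c ≤ φ^[n] ⊥) :
    IsStable φ n := by
  have hn : φ^[n] ⊥ = c := le_antisymm (hφ.iterate_bot_le_of_map_le hc.le n) hcn
  rw [IsStable, iterate_succ_apply', hn, hc]

section Swap

variable {α β : Type*} {f : α × β → α} {g : α × β → β}

theorem iterate_prod_comp_swap [Bot α] [Bot β] (n : ℕ) :
    (Function.prod (g ∘ Prod.swap) (f ∘ Prod.swap))^[n] ⊥ = ((Function.prod f g)^[n] ⊥).swap :=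
  ((Semiconj.iterate_right (f := Prod.swap) (ga := Function.prod f g)
    (gb := Function.prod (g ∘ Prod.swap) (f ∘ Prod.swap)) (fun _ => rfl) n) ⊥).symm

theorem isFixedPt_prod_comp_swap_iff {c : β × α} :
    IsFixedPt (Function.prod (g ∘ Prod.swap) (f ∘ Prod.swap)) c ↔
      IsFixedPt (Function.prod f g) c.swap := by
  simp [IsFixedPt, Prod.ext_iff, and_comm]

end Swap

section Pair

variable {α β : Type*} [Preorder α] [Preorder β] [OrderBot β] {f : α × β → α} {g : α × β → β}

theorem approxFix_mono (hg : Monotone g) (q : ℕ) : Monotone (approxFix g q) := fun x x' hx =>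
  Monotone.iterate_le_of_le (f := fun y => g (x, y)) (g := fun y => g (x', y))
    (fun _ _ hy => hg ⟨le_rfl, hy⟩) (fun _ => hg ⟨hx, le_rfl⟩) q ⊥

theorem approxSubst_mono (hf : Monotone f) (hg : Monotone g) (q : ℕ) :
    Monotone (approxSubst f g q) := fun _ _ hx => hf ⟨hx, approxFix_mono hg q hx⟩

theorem approxFix_le_of_map_le (hg : Monotone g) {a : α} {b : β} (hb : g (a, b) ≤ b) (q : ℕ) :
    approxFix g q a ≤ b :=
  Monotone.iterate_bot_le_of_map_le (φ := fun y => g (a, y)) (fun _ _ hy => hg ⟨le_rfl, hy⟩) hb q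

variable [OrderBot α]

theorem isFixedPt_approxFixedPt {p q : ℕ} (hgq : ∀ u : α, IsStable (fun y => g (u, y)) q)
    (hFp : IsStable (approxSubst f g q) p) :
    IsFixedPt (Function.prod f g) (approxFixedPt f g p q) :=
  Prod.ext hFp.isFixedPt (hgq _).isFixedPt

theorem approxFixedPt_le_of_map_le (hf : Monotone f) (hg : Monotone g) (p q : ℕ) {c : α × β}
    (hc : Function.prod f g c ≤ c) : approxFixedPt f g p q ≤ c := by
  have hb : approxFix g q c.1 ≤ c.2 := approxFix_le_of_map_le hg hc.2 q
  have hFc : approxSubst f g q c.1 ≤ c.1 :=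
    (hf (show (c.1, approxFix g q c.1) ≤ c from ⟨le_rfl, hb⟩)).trans hc.1
  have hx : (approxSubst f g q)^[p] ⊥ ≤ c.1 :=
    (approxSubst_mono hf hg q).iterate_bot_le_of_map_le hFc p
  exact ⟨hx, (approxFix_mono hg q hx).trans hb⟩

theorem approxFix_le_snd_iterate (hf : Monotone f) (hg : Monotone g) {u : α} {m : ℕ}
    (hu : u ≤ ((Function.prod f g)^[m] ⊥).1) (j : ℕ) :
    approxFix g j u ≤ ((Function.prod f g)^[m + j] ⊥).2 := by
  induction j with
  | zero => exact bot_le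
  | succ j ih =>
    have hu' : u ≤ ((Function.prod f g)^[m + j] ⊥).1 :=
      hu.trans ((hf.prodMk hg).monotone_iterate_bot (m.le_add_right j)).1
    rw [approxFix, iterate_succ_apply', ← add_assoc, iterate_succ_apply']
    exact hg ⟨hu', ih⟩

theorem iterate_approxSubst_le_fst_iterate (hf : Monotone f) (hg : Monotone g) (q k : ℕ) :
    (approxSubst f g q)^[k] ⊥ ≤ ((Function.prod f g)^[(q + 1) * k] ⊥).1 := by
  induction k with
  | zero => exact bot_le
  | succ k ih =>
    have hx : (approxSubst f g q)^[k] ⊥ ≤ ((Function.prod f g)^[(q + 1) * k + q] ⊥).1 :=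
      ih.trans ((hf.prodMk hg).monotone_iterate_bot (Nat.le_add_right _ q)).1
    rw [iterate_succ_apply', show (q + 1) * (k + 1) = (q + 1) * k + q + 1 by ring,
      iterate_succ_apply']
    exact hf ⟨hx, approxFix_le_snd_iterate hf hg ih q⟩

end Pair

/-- Symmetric fixpoint lemma: if `g_u := g (u, ·)` is `q`-stable for all `u`,
`F x := f (x, g_x^[q] ⊥)` is `p`-stable, `f_v := f (·, v)` is `p`-stable for
all `v`, and `G y := g (f_y^[p] ⊥, y)` is `q`-stable, then
`h = (f, g) : L₁ × L₂ → L₁ × L₂` is `(pq + max p q)`-stable. -/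
theorem symmetric_stability {L₁ L₂ : Type*} [PartialOrder L₁] [OrderBot L₁]
    [PartialOrder L₂] [OrderBot L₂]
    (f : L₁ × L₂ → L₁) (g : L₁ × L₂ → L₂) (hf : Monotone f) (hg : Monotone g)
    (p q : ℕ)
    (hgq : ∀ u : L₁, (fun y => g (u, y))^[q + 1] ⊥ = (fun y => g (u, y))^[q] ⊥)
    (hFp : (fun x => f (x, (fun y => g (x, y))^[q] ⊥))^[p + 1] ⊥ =
           (fun x => f (x, (fun y => g (x, y))^[q] ⊥))^[p] ⊥)
    (hfp : ∀ v : L₂, (fun x => f (x, v))^[p + 1] ⊥ = (fun x => f (x, v))^[p] ⊥)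
    (hGq : (fun y => g ((fun x => f (x, y))^[p] ⊥, y))^[q + 1] ⊥ =
           (fun y => g ((fun x => f (x, y))^[p] ⊥, y))^[q] ⊥) :
    (fun z : L₁ × L₂ => (f z, g z))^[p * q + max p q + 1] ⊥ =
      (fun z : L₁ × L₂ => (f z, g z))^[p * q + max p q] ⊥ := by
  have hh : Monotone (Function.prod f g) := hf.prodMk hg
  have hswap : Monotone (Prod.swap : L₂ × L₁ → L₁ × L₂) := fun _ _ => Prod.swap_le_swap.2
  have hfix := isFixedPt_approxFixedPt hgq hFp
  have hfix' := isFixedPt_approxFixedPt (f := g ∘ Prod.swap) (g := f ∘ Prod.swap) hfp hGq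
  have hle := approxFixedPt_le_of_map_le hf hg p q (isFixedPt_prod_comp_swap_iff.1 hfix').le
  have hx := iterate_approxSubst_le_fst_iterate hf hg q p
  have hy := iterate_approxSubst_le_fst_iterate (hg.comp hswap) (hf.comp hswap) p q
  rw [iterate_prod_comp_swap, Prod.fst_swap] at hy
  refine hh.isStable_of_isFixedPt_le_iterate hfix ⟨hx.trans (hh.monotone_iterate_bot ?_).1,
    hle.2.trans (hy.trans (hh.monotone_iterate_bot ?_).2)⟩
  all_goals nlinarith [le_max_left p q, le_max_right p q]
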